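/- arXiv:2410.04080 — 2 statements merged into one kernel-verified Lean document; each statement's English description precedes it below -/
import Mathlib

section
/- Let f, f̂, γ > 0 be real numbers with |f̂ − f| ≤ 2·max{√(fι/L), ι/L} and γ ≥ 4ι/L for some ι, L > 0. Then 1/2 ≤ (f + γ)/(f̂ + (3/2)γ) ≤ 2. -/
/-- Ratio bound for the frequency estimator. -/
theorem stmt_2 (f fh γ ι L : ℝ) (hf : 0 < f) (hfh : 0 < fh) (hγ : 0 < γ)
    (hι : 0 < ι) (hL : 0 < L)
    (hconc : |fh - f| ≤ 2 * max (Real.sqrt (f * ι / L)) (ι / L))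
    (hγ4 : γ ≥ 4 * ι / L) :
    1/2 ≤ (f + γ) / (fh + (3/2) * γ) ∧ (f + γ) / (fh + (3/2) * γ) ≤ 2 := by
  have he : 0 < ι / L := div_pos hι hL
  have hγe : 4 * (ι / L) ≤ γ := by rw [← mul_div_assoc]; exact hγ4
  have hsq : Real.sqrt (f * ι / L) ≤ f / 4 + ι / L := by
    have h1 : f * ι / L = f * (ι / L) := by ring
    rw [h1]
    calc Real.sqrt (f * (ι / L)) ≤ Real.sqrt ((f / 4 + ι / L) ^ 2) :=
          Real.sqrt_le_sqrt (by nlinarith [sq_nonneg (f / 4 - ι / L)])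
      _ = f / 4 + ι / L := Real.sqrt_sq (by positivity)
  have hmax : max (Real.sqrt (f * ι / L)) (ι / L) ≤ f / 4 + ι / L :=
    max_le hsq (by linarith)
  have habs : |fh - f| ≤ f / 2 + 2 * (ι / L) := le_trans hconc (by linarith)
  rw [abs_le] at habs
  have hD : 0 < fh + (3/2) * γ := by positivity
  constructor
  · rw [le_div_iff₀ hD]; nlinarith
  · rw [div_le_iff₀ hD]; nlinarith
end

section
/- Let 0 < γ, and for t = 1,…,n let a_t be random arms adapted to a filtration, with conditional law q_t over [K] satisfying q_t(a) = f(a) for a fixed vector f with f(a) ≥ 0 and ∑_a f(a) ≤ 1. Then E[∑_{t=1}^n 1/(f(a_t) + γ) | history] ≤ Kn, each term 1/(f(a_t)+γ) ≤ 1/γ, and E[(1/(f(a_t)+γ))^2 | history] ≤ ∑_a 1/(f(a)+γ). Consequently, by Freedman's inequality with λ = γ, with probability at least 1 − δ: ∑_{t=1}^n 1/(f(a_t)+γ) ≤ 2Kn + (1/γ)log(1/δ). -/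
/-!
Each term `1 / (f (a_t) + γ)` is a function of the arm, so its conditional expectation is the
average against `f`; this gives the first and third bounds through `f a / (f a + γ) ≤ 1`.
For the high-probability bound, `exp (γ x) ≤ 1 + γ x + (γ x)²` on `[0, 1/γ]` shows that the
conditional moment generating function of each term at `γ` is at most `1 + 2γK ≤ exp (2γK)`.
Peeling off one factor at a time by the tower property bounds the moment generating function
of the sum by `exp (2γKn)`, and the Chernoff bound gives the tail estimate.
-/

open MeasureTheory ProbabilityTheory Finset Real

section Deterministic

variable {ι : Type*} [Fintype ι] {p γ : ℝ}

lemma one_div_add_mul_le_one (hp : 0 ≤ p) (hγ : 0 < γ) : 1 / (p + γ) * p ≤ 1 := by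
  rw [one_div_mul_eq_div, div_le_one (by positivity)]
  linarith

lemma sq_one_div_add_mul_le (hp : 0 ≤ p) (hγ : 0 < γ) :
    (1 / (p + γ)) ^ 2 * p ≤ 1 / (p + γ) := by
  calc (1 / (p + γ)) ^ 2 * p = 1 / (p + γ) * (1 / (p + γ) * p) := by ring
    _ ≤ 1 / (p + γ) * 1 := by gcongr; exact one_div_add_mul_le_one hp hγ
    _ = 1 / (p + γ) := mul_one _

lemma exp_mul_one_div_add_mul_le (hp : 0 ≤ p) (hγ : 0 < γ) :
    exp (γ * (1 / (p + γ))) * p ≤ p + 2 * γ := by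
  set x := γ * (1 / (p + γ))
  have hx0 : 0 ≤ x := by positivity
  have hxp : x * p ≤ γ := by
    calc x * p = γ * (1 / (p + γ) * p) := by ring
      _ ≤ γ * 1 := by gcongr; exact one_div_add_mul_le_one hp hγ
      _ = γ := mul_one γ
  have hx1 : x ≤ 1 := by
    show γ * (1 / (p + γ)) ≤ 1
    rw [mul_one_div, div_le_one (by positivity)]
    linarith
  have hexp : exp x ≤ 1 + x + x ^ 2 := by
    have := abs_exp_sub_one_sub_id_le (x := x) (by rwa [abs_of_nonneg hx0])
    linarith [le_abs_self (exp x - 1 - x)]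
  have hx2p : x ^ 2 * p ≤ x * p := by
    rw [sq, mul_assoc]
    exact mul_le_of_le_one_left (by positivity) hx1
  nlinarith

lemma sum_one_div_add_mul_le_card {f : ι → ℝ} (hf : ∀ a, 0 ≤ f a) (hγ : 0 < γ) :
    ∑ a, 1 / (f a + γ) * f a ≤ Fintype.card ι := by
  calc ∑ a, 1 / (f a + γ) * f a ≤ ∑ _a : ι, (1 : ℝ) :=
        sum_le_sum fun a _ => one_div_add_mul_le_one (hf a) hγ
    _ = Fintype.card ι := by simp

lemma sum_exp_mul_one_div_add_mul_le {f : ι → ℝ} (hf : ∀ a, 0 ≤ f a) (hfsum : ∑ a, f a ≤ 1)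
    (hγ : 0 < γ) :
    ∑ a, exp (γ * (1 / (f a + γ))) * f a ≤ exp (γ * (2 * Fintype.card ι)) := by
  calc ∑ a, exp (γ * (1 / (f a + γ))) * f a ≤ ∑ a, (f a + 2 * γ) :=
        sum_le_sum fun a _ => exp_mul_one_div_add_mul_le (hf a) hγ
    _ = ∑ a, f a + γ * (2 * Fintype.card ι) := by
        rw [sum_add_distrib, sum_const, card_univ, nsmul_eq_mul]
        ring
    _ ≤ γ * (2 * Fintype.card ι) + 1 := by linarith
    _ ≤ exp (γ * (2 * Fintype.card ι)) := add_one_le_exp _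

end Deterministic

section Probability

variable {Ω : Type*} {m mΩ : MeasurableSpace Ω} {μ : Measure Ω}

lemma integrable_exp_of_le [IsFiniteMeasure μ] {Y : Ω → ℝ} {C : ℝ} (hY : Measurable Y)
    (hYC : ∀ ω, Y ω ≤ C) : Integrable (fun ω => exp (Y ω)) μ :=
  Integrable.of_bound hY.exp.aestronglyMeasurable (exp C) <| ae_of_all _ fun ω => by
    rw [norm_of_nonneg (exp_pos _).le]
    exact exp_le_exp.2 (hYC ω)

theorem condExp_comp_eq_sum_mul {α : Type*} [Fintype α] [DecidableEq α] [MeasurableSpace α]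
    [MeasurableSingletonClass α] [IsFiniteMeasure μ] {Y : Ω → α} (hY : Measurable Y)
    {p : α → ℝ} (hp : ∀ a, μ[fun ω => if Y ω = a then (1 : ℝ) else 0 | m] =ᵐ[μ] fun _ => p a)
    (g : α → ℝ) :
    μ[fun ω => g (Y ω) | m] =ᵐ[μ] fun _ => ∑ a, g a * p a := by
  set ind : α → Ω → ℝ := fun a ω => if Y ω = a then 1 else 0
  have hind : ∀ a, Integrable (ind a) μ := fun a =>
    Integrable.of_bound ((measurable_of_finite fun b => if b = a then (1 : ℝ) else 0).comp
      hY).aestronglyMeasurable 1 <|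
      ae_of_all _ fun ω => by unfold ind; split_ifs <;> simp
  have hg : (fun ω => g (Y ω)) = ∑ a, g a • ind a := by
    funext ω
    simp [ind]
  have hsum := condExp_finsetSum (m := m) (μ := μ) (s := univ) (f := fun a => g a • ind a)
    fun a _ => (hind a).smul (g a)
  have hsmul := ae_all_iff.2 fun a => condExp_smul (m := m) (μ := μ) (g a) (ind a)
  rw [hg]
  filter_upwards [hsum, hsmul, ae_all_iff.2 hp] with ω hsum hsmul hp
  rw [hsum, Finset.sum_apply]
  exact sum_congr rfl fun a _ => by rw [hsmul a, Pi.smul_apply, hp a, smul_eq_mul]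

variable {ℋ : Filtration ℕ mΩ} {X : ℕ → Ω → ℝ}

theorem integral_exp_sum_le_pow [IsProbabilityMeasure μ] {C c : ℝ}
    (hX : ∀ t, Measurable[ℋ (t + 1)] (X t)) (hXC : ∀ t ω, X t ω ≤ C) (hc : 0 ≤ c)
    (hmgf : ∀ t, μ[fun ω => exp (X t ω) | ℋ t] ≤ᵐ[μ] fun _ => c) (n : ℕ) :
    ∫ ω, exp (∑ t ∈ range n, X t ω) ∂μ ≤ c ^ n := by
  have hXm : ∀ t, Measurable (X t) := fun t => (hX t).mono (ℋ.le _) le_rfl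
  induction n with
  | zero => simp
  | succ n ih =>
    set M : Ω → ℝ := fun ω => exp (∑ t ∈ range n, X t ω)
    set E : Ω → ℝ := fun ω => exp (X n ω)
    have hM_meas : StronglyMeasurable[ℋ n] M :=
      (Finset.measurable_sum _ fun t ht =>
        (hX t).mono (ℋ.mono (mem_range.1 ht)) le_rfl).exp.stronglyMeasurable
    have hM_int : Integrable M μ :=
      integrable_exp_of_le (Finset.measurable_sum _ fun t _ => hXm t)
        (fun ω => sum_le_sum fun t _ => hXC t ω)
    have hME : (fun ω => exp (∑ t ∈ range (n + 1), X t ω)) = M * E := by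
      funext ω
      simp only [M, E, Pi.mul_apply, sum_range_succ, exp_add]
    have hME_int : Integrable (M * E) μ := by
      rw [← hME]
      exact integrable_exp_of_le (Finset.measurable_sum _ fun t _ => hXm t)
        (fun ω => sum_le_sum fun t _ => hXC t ω)
    have hpull : μ[M * E | ℋ n] ≤ᵐ[μ] fun ω => M ω * c := by
      filter_upwards [condExp_mul_of_stronglyMeasurable_left hM_meas hME_int
        (integrable_exp_of_le (hXm n) (hXC n)), hmgf n] with ω hω hE
      rw [hω, Pi.mul_apply]
      exact mul_le_mul_of_nonneg_left hE (exp_pos _).le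
    calc ∫ ω, exp (∑ t ∈ range (n + 1), X t ω) ∂μ = ∫ ω, μ[M * E | ℋ n] ω ∂μ := by
          rw [hME, integral_condExp (ℋ.le n)]
      _ ≤ ∫ ω, M ω * c ∂μ := integral_mono_ae integrable_condExp (hM_int.mul_const c) hpull
      _ = (∫ ω, M ω ∂μ) * c := integral_mul_const c M
      _ ≤ c ^ n * c := by gcongr
      _ = c ^ (n + 1) := (pow_succ c n).symm

theorem measureReal_sum_ge_le_exp [IsProbabilityMeasure μ] {θ C v : ℝ} (hθ : 0 ≤ θ)
    (hX : ∀ t, Measurable[ℋ (t + 1)] (X t)) (hXC : ∀ t ω, X t ω ≤ C)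
    (hmgf : ∀ t, μ[fun ω => exp (θ * X t ω) | ℋ t] ≤ᵐ[μ] fun _ => exp (θ * v)) (n : ℕ)
    (ε : ℝ) :
    μ.real {ω | ε ≤ ∑ t ∈ range n, X t ω} ≤ exp (θ * (n * v - ε)) := by
  have hθX : ∀ t, Measurable[ℋ (t + 1)] (fun ω => θ * X t ω) := fun t => (hX t).const_mul θ
  have hmgf_sum : mgf (fun ω => ∑ t ∈ range n, X t ω) μ θ ≤ exp (θ * v) ^ n := by
    simp only [mgf, mul_sum]
    exact integral_exp_sum_le_pow hθX (fun t ω => mul_le_mul_of_nonneg_left (hXC t ω) hθ)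
      (exp_pos _).le hmgf n
  have hint : Integrable (fun ω => exp (θ * ∑ t ∈ range n, X t ω)) μ :=
    integrable_exp_of_le ((Finset.measurable_sum _ fun t _ =>
      (hX t).mono (ℋ.le _) le_rfl).const_mul θ)
      (fun ω => mul_le_mul_of_nonneg_left (sum_le_sum fun t _ => hXC t ω) hθ)
  calc μ.real {ω | ε ≤ ∑ t ∈ range n, X t ω}
      ≤ exp (-θ * ε) * mgf (fun ω => ∑ t ∈ range n, X t ω) μ θ :=
        measure_ge_le_exp_mul_mgf ε hθ hint
    _ ≤ exp (-θ * ε) * exp (θ * v) ^ n := by gcongr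
    _ = exp (θ * (n * v - ε)) := by rw [← exp_nat_mul, ← exp_add]; ring_nf

lemma ofReal_one_sub_le_of_measureReal_compl_le [IsProbabilityMeasure μ] {s : Set Ω} {δ : ℝ}
    (h : μ.real sᶜ ≤ δ) : ENNReal.ofReal (1 - δ) ≤ μ s := by
  have hδ : 0 ≤ δ := measureReal_nonneg.trans h
  have hcompl : μ sᶜ ≤ ENNReal.ofReal δ :=
    (ENNReal.le_ofReal_iff_toReal_le (measure_ne_top μ _) hδ).2 h
  rw [ENNReal.ofReal_sub _ hδ, ENNReal.ofReal_one, tsub_le_iff_right, ← measure_univ (μ := μ)]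
  exact (measure_univ_le_add_compl s).trans (by gcongr)

end Probability

theorem stmt_11_general {Ω : Type*} {mΩ : MeasurableSpace Ω} (μ : Measure Ω) [IsProbabilityMeasure μ]
    (K n : ℕ) (γ : ℝ) (hγ : 0 < γ)
    (f : Fin K → ℝ) (hf : ∀ a, 0 ≤ f a) (hfsum : ∑ a, f a ≤ 1)
    (ℋ : Filtration ℕ mΩ) (arm : ℕ → Ω → Fin K)
    (hmeas : ∀ t, Measurable[ℋ (t+1)] (arm (t+1)))
    (hlaw : ∀ t a, μ[fun ω => if arm (t+1) ω = a then (1:ℝ) else 0 | ℋ t]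
      =ᵐ[μ] fun _ => f a)
    (δ : ℝ) (hδ : δ ∈ Set.Ioo (0:ℝ) 1) :
    (∀ᵐ ω ∂μ, ∑ t ∈ Finset.range n,
        (μ[fun ω' => 1 / (f (arm (t+1) ω') + γ) | ℋ t]) ω ≤ K * n) ∧
    (∀ t ω, 1 / (f (arm (t+1) ω) + γ) ≤ 1 / γ) ∧
    (∀ t, ∀ᵐ ω ∂μ, (μ[fun ω' => (1 / (f (arm (t+1) ω') + γ))^2 | ℋ t]) ω
        ≤ ∑ a, 1 / (f a + γ)) ∧
    μ {ω | ∑ t ∈ Finset.range n, 1 / (f (arm (t+1) ω) + γ)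
        ≤ 2 * K * n + (1/γ) * Real.log (1/δ)} ≥ ENNReal.ofReal (1 - δ) := by
  have hX_le : ∀ t ω, 1 / (f (arm (t+1) ω) + γ) ≤ 1 / γ := fun t ω =>
    one_div_le_one_div_of_le hγ (by linarith [hf (arm (t+1) ω)])
  have hcond := fun t => condExp_comp_eq_sum_mul ((hmeas t).mono (ℋ.le _) le_rfl) (hlaw t)
  refine ⟨?_, hX_le, fun t => ?_, ?_⟩
  · filter_upwards [ae_all_iff.2 fun t => hcond t fun a => 1 / (f a + γ)] with ω hω
    calc _ = ∑ t ∈ range n, ∑ a, 1 / (f a + γ) * f a := sum_congr rfl fun t _ => hω t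
      _ ≤ ∑ _t ∈ range n, (K : ℝ) := sum_le_sum fun _ _ => by
          simpa using sum_one_div_add_mul_le_card hf hγ
      _ = K * n := by simp [mul_comm]
  · filter_upwards [hcond t fun a => (1 / (f a + γ)) ^ 2] with ω hω
    rw [hω]
    exact sum_le_sum fun a _ => sq_one_div_add_mul_le (hf a) hγ
  · have hmgf : ∀ t, μ[fun ω => exp (γ * (1 / (f (arm (t+1) ω) + γ))) | ℋ t]
        ≤ᵐ[μ] fun _ => exp (γ * (2 * K)) := fun t =>
      (hcond t fun a => exp (γ * (1 / (f a + γ)))).trans_le <| .of_forall fun _ => by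
        have h := sum_exp_mul_one_div_add_mul_le hf hfsum hγ
        rwa [Fintype.card_fin] at h
    have htail := measureReal_sum_ge_le_exp hγ.le
      (fun t => (measurable_of_finite fun a => 1 / (f a + γ)).comp (hmeas t)) hX_le hmgf n
      (2 * K * n + (1/γ) * Real.log (1/δ))
    have hexp : γ * (n * (2 * K) - (2 * K * n + (1/γ) * Real.log (1/δ))) = Real.log δ := by
      rw [one_div δ, Real.log_inv]
      field_simp
      ring
    rw [hexp, Real.exp_log hδ.1] at htail
    refine ofReal_one_sub_le_of_measureReal_compl_le (le_trans (measureReal_mono ?_) htail)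
    exact fun ω hω => (not_le.1 (Set.notMem_ofPred_iff.1 hω)).le

/-- Bounds on sums of inverse observation probabilities, and the Freedman consequence. -/
theorem stmt_11 {Ω : Type*} {mΩ : MeasurableSpace Ω} (μ : Measure Ω) [IsProbabilityMeasure μ]
    (K n : ℕ) (hK : 0 < K) (γ : ℝ) (hγ : 0 < γ)
    (f : Fin K → ℝ) (hf : ∀ a, 0 ≤ f a) (hfsum : ∑ a, f a ≤ 1)
    (ℋ : Filtration ℕ mΩ) (arm : ℕ → Ω → Fin K)
    (hmeas : ∀ t, Measurable[ℋ (t+1)] (arm (t+1)))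
    (hlaw : ∀ t a, μ[fun ω => if arm (t+1) ω = a then (1:ℝ) else 0 | ℋ t]
      =ᵐ[μ] fun _ => f a)
    (δ : ℝ) (hδ : δ ∈ Set.Ioo (0:ℝ) 1) :
    (∀ᵐ ω ∂μ, ∑ t ∈ Finset.range n,
        (μ[fun ω' => 1 / (f (arm (t+1) ω') + γ) | ℋ t]) ω ≤ K * n) ∧
    (∀ t ω, 1 / (f (arm (t+1) ω) + γ) ≤ 1 / γ) ∧
    (∀ t, ∀ᵐ ω ∂μ, (μ[fun ω' => (1 / (f (arm (t+1) ω') + γ))^2 | ℋ t]) ω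
        ≤ ∑ a, 1 / (f a + γ)) ∧
    μ {ω | ∑ t ∈ Finset.range n, 1 / (f (arm (t+1) ω) + γ)
        ≤ 2 * K * n + (1/γ) * Real.log (1/δ)} ≥ ENNReal.ofReal (1 - δ) :=
  stmt_11_general μ K n γ hγ f hf hfsum ℋ arm hmeas hlaw δ hδ
end
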